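/- arXiv:1108.5792 — 2 statements merged into one kernel-verified Lean document; each statement's English description precedes it below -/
import Mathlib

section
/- For all integers k ≥ i ≥ 2 and all m, n ≥ 0, F_{k,i−1}(m,n) = G_{k,i}(m,n). -/
open scoped BigOperators

/-- A part of an overpartition: `(value, overlined?)`. -/
abbrev OPart : Type := ℕ × Bool

/-- Order key on parts, realizing `1̄ < 1 < 2̄ < 2 < ⋯`:
overlined `v` ↦ `2v − 1`, non-overlined `v` ↦ `2v`. -/
def okey (p : OPart) : ℕ := 2 * p.1 - (if p.2 then 1 else 0)

/-- `L` is an overpartition written with parts in non-increasing order: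
all parts are positive, the keys are non-increasing, and each overlined part
occurs at most once. -/
def IsOverpartition (L : List OPart) : Prop :=
  (∀ p ∈ L, 1 ≤ p.1) ∧ List.Chain' (fun p q => okey q ≤ okey p) L ∧
    ∀ v : ℕ, List.count ((v, true) : OPart) L ≤ 1

/-- The number partitioned by an overpartition. -/
def osum (L : List OPart) : ℕ := (L.map Prod.fst).sum

/-- Difference condition: `d_j − d_{j+k−1} ≥ 1` if `d_j` is overlined,
and `d_j − d_{j+k−1} ≥ 2` otherwise. -/
def DiffCond (k : ℕ) (L : List OPart) : Prop :=
  ∀ (j : ℕ) (p q : OPart), L[j]? = some p → L[j + k - 1]? = some q →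
    if p.2 then q.1 + 1 ≤ p.1 else q.1 + 2 ≤ p.1

/-- Overpartitions counted by `D_{k,i}`: the difference condition holds and `1`
occurs as a non-overlined part at most `i − 1` times. -/
def DCondition (k i : ℕ) (L : List OPart) : Prop :=
  IsOverpartition L ∧ DiffCond k L ∧ List.count (((1 : ℕ), false) : OPart) L ≤ i - 1

/-- `D_{k,i}(n)`. -/
noncomputable def Dnum (k i n : ℕ) : ℕ :=
  Nat.card {L : List OPart // DCondition k i L ∧ osum L = n}

/-- `D_{k,i}(m,n)`. -/
noncomputable def Dmn (k i m n : ℕ) : ℕ :=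
  Nat.card {L : List OPart // DCondition k i L ∧ L.length = m ∧ osum L = n}

/-- The smallest part (the last one in the non-increasing list) is overlined. -/
def SmallestOverlined (L : List OPart) : Prop :=
  ∃ p : OPart, L.getLast? = some p ∧ p.2 = true

/-- The smallest part is non-overlined. -/
def SmallestNonOverlined (L : List OPart) : Prop :=
  ∃ p : OPart, L.getLast? = some p ∧ p.2 = false

/-- `F_{k,i}(m,n)`. -/
noncomputable def Fmn (k i m n : ℕ) : ℕ :=
  Nat.card {L : List OPart // DCondition k i L ∧ L.length = m ∧ osum L = n ∧
    SmallestOverlined L}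

/-- `G_{k,i}(m,n)`. -/
noncomputable def Gmn (k i m n : ℕ) : ℕ :=
  Nat.card {L : List OPart // DCondition k i L ∧ L.length = m ∧ osum L = n ∧
    SmallestNonOverlined L}

/-- `(a;q)_n`. -/
noncomputable def qPoch (a q : ℂ) (n : ℕ) : ℂ := ∏ j ∈ Finset.range n, (1 - a * q ^ j)

/-- `(a;q)_∞`. -/
noncomputable def qPochInf (a q : ℂ) : ℂ := ∏' j : ℕ, (1 - a * q ^ j)

/-- `(−q;q)_{N−1}`, with the convention `(−q)_{−1} = 1/2` when `N = 0`. -/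
noncomputable def negqPochPred (q : ℂ) (N : ℕ) : ℂ :=
  if N = 0 then 1 / 2 else qPoch (-q) q (N - 1)

/-- From a tuple `(N_1, …, N_K)` (0-indexed), the value `N_j` for `1 ≤ j ≤ K`,
and `0` otherwise (in particular `N_{K+1} = 0`). -/
def Nval {K : ℕ} (N : Fin K → ℕ) (j : ℕ) : ℕ :=
  if h : 1 ≤ j ∧ j ≤ K then N ⟨j - 1, by omega⟩ else 0

/-- Non-increasing tuples `N_1 ≥ N_2 ≥ ⋯ ≥ N_K ≥ 0`. -/
def DecTuple (K : ℕ) : Type := {N : Fin K → ℕ // ∀ a b : Fin K, a ≤ b → N b ≤ N a}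

/-- An ordinary partition written as a non-increasing list of positive integers. -/
def IsPartitionList (L : List ℕ) : Prop :=
  (∀ p ∈ L, 1 ≤ p) ∧ List.Chain' (fun a b => b ≤ a) L

/-- Underlying value of the part at position `j`. -/
def valAt (L : List OPart) (j : ℕ) : ℕ := (L[j]?.map Prod.fst).getD 0

/-- Whether the part at position `j` is overlined. -/
def ovAt (L : List OPart) (j : ℕ) : Bool := (L[j]?.map Prod.snd).getD false

/-- In the Gordon marking process (parts treated in increasing order
`1̄ < 1 < 2̄ < 2 < ⋯`, i.e. from the end of the non-increasing list `L`),
the mark `r` is not available for the part at position `pos`, given the marking `m`: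
either an already-marked part with the same underlying value has mark `r`, or a part
whose underlying value is one less has mark `r` and the reuse exception (the
overlined version of the current value is a part of `L` and `r` is the smallest
mark used on parts of the preceding value) does not apply. -/
def Blocked (L : List OPart) (m : ℕ → ℕ) (pos r : ℕ) : Prop :=
  (∃ p', pos < p' ∧ p' < L.length ∧ valAt L p' = valAt L pos ∧ m p' = r) ∨
  (∃ p', p' < L.length ∧ valAt L p' + 1 = valAt L pos ∧ m p' = r ∧
     ¬((((valAt L pos, true) : OPart) ∈ L) ∧
        ∀ p'', p'' < L.length → valAt L p'' + 1 = valAt L pos → r ≤ m p''))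

/-- `m` is the Gordon marking of `L`: every part gets the smallest available
positive mark, parts being processed in increasing order. -/
def IsGordonMarking (L : List OPart) (m : ℕ → ℕ) : Prop :=
  ∀ pos, pos < L.length →
    1 ≤ m pos ∧ ¬Blocked L m pos (m pos) ∧ ∀ r, 1 ≤ r → r < m pos → Blocked L m pos r

/-- The number of `r`-marked parts. -/
def markCount (L : List OPart) (m : ℕ → ℕ) (r : ℕ) : ℕ :=
  ((Finset.range L.length).filter fun pos => m pos = r).card

/-- `U_{N_1,…,N_{k−1};i}`: overpartitions counted by `D_{k,i}` whose smallest part is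
overlined and whose Gordon marking has exactly `N_r` `r`-marked parts, `1 ≤ r ≤ k−1`. -/
def UGSet (k i : ℕ) (N : Fin (k - 1) → ℕ) : Set (List OPart) :=
  {L | DCondition k i L ∧ SmallestOverlined L ∧
    ∃ m : ℕ → ℕ, IsGordonMarking L m ∧ ∀ r : Fin (k - 1), markCount L m ((r : ℕ) + 1) = N r}

/-- `P_{N_1,…,N_{k−1};i}`: members of `U` all of whose `1`-marked parts are overlined. -/
def PGSet (k i : ℕ) (N : Fin (k - 1) → ℕ) : Set (List OPart) :=
  {L | DCondition k i L ∧ SmallestOverlined L ∧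
    ∃ m : ℕ → ℕ, IsGordonMarking L m ∧ (∀ r : Fin (k - 1), markCount L m ((r : ℕ) + 1) = N r) ∧
      ∀ pos, pos < L.length → m pos = 1 → ovAt L pos = true}

/-- `f_t(λ) + f_{t̄}(λ) + f_{t+1}(λ) = k − 1` for every positive `t` smaller than the
underlying value of the greatest `(k−1)`-marked part. -/
def QCondition (k : ℕ) (L : List OPart) (m : ℕ → ℕ) : Prop :=
  ∀ t : ℕ, 1 ≤ t → (∃ pos, pos < L.length ∧ m pos = k - 1 ∧ t < valAt L pos) →
    List.count ((t, false) : OPart) L + List.count ((t, true) : OPart) L +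
      List.count ((t + 1, false) : OPart) L = k - 1

/-- `Q_{N_1,…,N_{k−1};i}`. -/
def QGSet (k i : ℕ) (N : Fin (k - 1) → ℕ) : Set (List OPart) :=
  {L | DCondition k i L ∧ SmallestOverlined L ∧
    ∃ m : ℕ → ℕ, IsGordonMarking L m ∧ (∀ r : Fin (k - 1), markCount L m ((r : ℕ) + 1) = N r) ∧
      (∀ pos, pos < L.length → m pos = 1 → ovAt L pos = true) ∧ QCondition k L m}

/-- `Q_{N_1,…,N_{k−1};i}(n)` with an integer index `n` (empty when `n < 0`). -/
def QGSetZ (k i : ℕ) (N : Fin (k - 1) → ℕ) (n : ℤ) : Set (List OPart) :=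
  {L | L ∈ QGSet k i N ∧ (osum L : ℤ) = n}


/-
Flipping the overline of the smallest part is a bijection between the two sides.
If the smallest part is `v̄`, every other part is at least `v` (it cannot be `v̄` again), so
`v̄ ↦ v` keeps the parts in order; conversely, if the smallest part is `v`, then `v̄` is not
a part, so `v ↦ v̄` creates no repeated overlined part. The flip raises the number of
non-overlined `1`s by exactly one when `v = 1`, and otherwise no `1` occurs at all. The
difference condition only sees the last part through its value as the far end `d_{j+k−1}`,
since for `k ≥ 2` the last part has no partner `k − 1` places further on.
-/

def flipLast (L : List OPart) : List OPart :=
  L.dropLast ++ (L.getLast?.map fun p => (p.1, !p.2)).toList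

@[simp]
lemma flipLast_nil : flipLast [] = [] := rfl

@[simp]
lemma flipLast_concat (D : List OPart) (p : OPart) :
    flipLast (D ++ [p]) = D ++ [(p.1, !p.2)] := by
  simp [flipLast]

lemma flipLast_involutive : Function.Involutive flipLast := by
  intro L
  rcases L.eq_nil_or_concat with rfl | ⟨D, p, rfl⟩
  · rfl
  · simp

@[simp]
lemma okey_true (v : ℕ) : okey (v, true) = 2 * v - 1 := rfl

@[simp]
lemma okey_false (v : ℕ) : okey (v, false) = 2 * v := by
  simp [okey]

@[simp]
lemma osum_concat (D : List OPart) (x : OPart) : osum (D ++ [x]) = osum D + x.1 := by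
  simp [osum]

@[simp]
lemma smallestOverlined_concat (D : List OPart) (p : OPart) :
    SmallestOverlined (D ++ [p]) ↔ p.2 = true := by
  simp [SmallestOverlined]

@[simp]
lemma smallestNonOverlined_concat (D : List OPart) (p : OPart) :
    SmallestNonOverlined (D ++ [p]) ↔ p.2 = false := by
  simp [SmallestNonOverlined]

lemma List.isChain_concat_iff {α : Type*} {R : α → α → Prop} [Trans R R R]
    {l : List α} {x : α} : List.IsChain R (l ++ [x]) ↔ List.IsChain R l ∧ ∀ z ∈ l, R z x := by
  simp [List.isChain_iff_pairwise, List.pairwise_append]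

lemma isOverpartition_concat_iff {D : List OPart} {x : OPart} :
    IsOverpartition (D ++ [x]) ↔
      IsOverpartition D ∧ 1 ≤ x.1 ∧ (∀ z ∈ D, okey x ≤ okey z) ∧ (x.2 = true → x ∉ D) := by
  have : Trans (fun p q : OPart => okey q ≤ okey p) (fun p q => okey q ≤ okey p)
      (fun p q => okey q ≤ okey p) := ⟨fun h₁ h₂ => h₂.trans h₁⟩
  have hcount : (∀ v, (D ++ [x]).count (v, true) ≤ 1) ↔
      (∀ v, D.count (v, true) ≤ 1) ∧ (x.2 = true → x ∉ D) := by
    simp only [List.count_append, List.count_singleton, beq_iff_eq]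
    constructor
    · intro h
      refine ⟨fun v => (Nat.le_add_right _ _).trans (h v), fun hx hmem => ?_⟩
      have hx' : x = (x.1, true) := Prod.ext rfl hx
      have := h x.1
      rw [if_pos hx', ← hx'] at this
      exact (List.count_pos_iff.2 hmem).ne' (by omega)
    · rintro ⟨h, hx⟩ v
      split_ifs with hxv
      · simp [List.count_eq_zero.2 (hx (by rw [hxv])), ← hxv]
      · exact h v
  simp only [IsOverpartition, List.Chain', List.isChain_concat_iff, List.mem_append,
    List.mem_singleton, or_imp, forall_and, forall_eq, hcount]
  tauto

lemma isOverpartition_concat_true_iff {D : List OPart} {v : ℕ} :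
    IsOverpartition (D ++ [(v, true)]) ↔ IsOverpartition (D ++ [(v, false)]) := by
  simp only [isOverpartition_concat_iff, okey_true, okey_false, forall_const, Bool.false_eq_true,
    false_imp_iff, and_true]
  refine and_congr_right fun _ => and_congr_right fun hv => ⟨?_, fun h => ?_⟩
  · rintro ⟨h, hvD⟩ ⟨u, b⟩ hz
    have hle := h _ hz
    cases b
    · simp only [okey_false] at hle ⊢
      omega
    · have huv : u ≠ v := by
        rintro rfl
        exact hvD hz
      simp only [okey_true] at hle ⊢
      omega
  · refine ⟨fun z hz => (h z hz).trans' (Nat.sub_le _ _), fun hvD => ?_⟩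
    have := h _ hvD
    simp only [okey_true] at this
    omega

lemma count_one_concat_true {D : List OPart} {v : ℕ} (hv : 1 ≤ v)
    (hD : ∀ z ∈ D, 2 * v ≤ okey z) :
    (D ++ [(v, true)]).count (1, false) = (D ++ [(v, false)]).count (1, false) - 1 := by
  rw [List.count_append, List.count_append]
  rcases hv.eq_or_lt with rfl | hv
  · simp
  · have hD1 : ((1, false) : OPart) ∉ D := fun h => by
      have := hD _ h
      simp only [okey_false] at this
      omega
    simp [List.count_eq_zero.2 hD1, hv.ne']

lemma diffCond_concat_of_fst_eq {k : ℕ} (hk : 2 ≤ k) {D : List OPart} {x y : OPart}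
    (hxy : x.1 = y.1) (h : DiffCond k (D ++ [x])) : DiffCond k (D ++ [y]) := by
  intro j p q hp hq
  have hj : j + k - 1 < D.length + 1 := by simpa using (List.getElem?_eq_some_iff.1 hq).1
  have hp' : (D ++ [x])[j]? = some p := by
    rwa [List.getElem?_append_left (by omega)] at hp ⊢
  obtain ⟨q', hq', hqq'⟩ : ∃ q', (D ++ [x])[j + k - 1]? = some q' ∧ q'.1 = q.1 := by
    have : ((D ++ [x]).map Prod.fst)[j + k - 1]? = ((D ++ [y]).map Prod.fst)[j + k - 1]? := by
      simp only [List.map_append, List.map_cons, List.map_nil, hxy]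
    rwa [List.getElem?_map, List.getElem?_map, hq, Option.map_some, Option.map_eq_some_iff] at this
  simpa [hqq'] using h j p q' hp' hq'

lemma dCondition_concat_true_iff {k i : ℕ} (hk : 2 ≤ k) (hi : 2 ≤ i) {D : List OPart}
    {v : ℕ} : DCondition k (i - 1) (D ++ [(v, true)]) ↔ DCondition k i (D ++ [(v, false)]) := by
  unfold DCondition
  rw [isOverpartition_concat_true_iff]
  refine and_congr_right fun hO => ?_
  obtain ⟨-, hv, hD, -⟩ := isOverpartition_concat_iff.1 hO
  simp only [okey_false] at hv hD
  refine and_congr ⟨diffCond_concat_of_fst_eq (y := (v, false)) hk rfl,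
    diffCond_concat_of_fst_eq (y := (v, true)) hk rfl⟩ ?_
  rw [count_one_concat_true hv hD]
  omega

lemma fCondition_iff_gCondition_flipLast {k i m n : ℕ} (hk : 2 ≤ k) (hi : 2 ≤ i)
    (L : List OPart) :
    (DCondition k (i - 1) L ∧ L.length = m ∧ osum L = n ∧ SmallestOverlined L) ↔
      (DCondition k i (flipLast L) ∧ (flipLast L).length = m ∧ osum (flipLast L) = n ∧
        SmallestNonOverlined (flipLast L)) := by
  rcases L.eq_nil_or_concat with rfl | ⟨D, ⟨v, b⟩, rfl⟩
  · simp [SmallestOverlined, SmallestNonOverlined]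
  · cases b <;> simp [dCondition_concat_true_iff hk hi]

/-- `F_{k,i−1}(m,n) = G_{k,i}(m,n)` for `k ≥ i ≥ 2`. -/
theorem stmt12 (k i m n : ℕ) (hi2 : 2 ≤ i) (hik : i ≤ k) :
    Fmn k (i - 1) m n = Gmn k i m n :=
  Nat.card_congr <| (flipLast_involutive.toPerm _).subtypeEquiv
    (fCondition_iff_gCondition_flipLast (hi2.trans hik) hi2)
end

section
/- For all integers k ≥ 1 and all m, n ≥ 0, G_{k,1}(m,n) = F_{k,k}(m, n−m). -/
open scoped BigOperators

/-!
Subtracting `1` from every part of an overpartition counted by `G_{k,1}(m, n)` and overlining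
its smallest part gives one counted by `F_{k,k}(m, n - m)`; adding `1` to every part and removing
the overline from the smallest part undoes this. All parts on the `G` side are at least `2`, since
there is no non-overlined `1` and the smallest part is non-overlined. The difference conditions
compare values, which all move by one, and do not see the overline of the smallest part. Finally
the non-overlined `1`s on the `F` side come from non-overlined `2`s, and the difference condition
allows at most `k - 1` of those.
-/

open List

namespace OverpartitionShift

@[simp]
def succPart (p : OPart) : OPart := (p.1 + 1, p.2)

@[simp]
def predPart (p : OPart) : OPart := (p.1 - 1, p.2)

def shiftUp (L : List OPart) : List OPart :=
  (L.map succPart).modifyLast fun p => (p.1, false)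

def shiftDown (L : List OPart) : List OPart :=
  (L.map predPart).modifyLast fun p => (p.1, true)

@[simp]
lemma shiftUp_concat (N : List OPart) (p : OPart) :
    shiftUp (N ++ [p]) = N.map succPart ++ [(p.1 + 1, false)] := by
  simp [shiftUp, modifyLast_concat]

@[simp]
lemma shiftDown_concat (N : List OPart) (p : OPart) :
    shiftDown (N ++ [p]) = N.map predPart ++ [(p.1 - 1, true)] := by
  simp [shiftDown, modifyLast_concat]

lemma map_fst_shiftUp (L : List OPart) : (shiftUp L).map Prod.fst = L.map (·.1 + 1) := by
  rcases L.eq_nil_or_concat' with rfl | ⟨N, p, rfl⟩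
  · rfl
  · simp

lemma map_fst_shiftDown (L : List OPart) : (shiftDown L).map Prod.fst = L.map (·.1 - 1) := by
  rcases L.eq_nil_or_concat' with rfl | ⟨N, p, rfl⟩
  · rfl
  · simp

lemma length_shiftDown (L : List OPart) : (shiftDown L).length = L.length := by
  simpa using congrArg length (map_fst_shiftDown L)

lemma osum_shiftUp (L : List OPart) : osum (shiftUp L) = osum L + L.length := by
  simp [osum, map_fst_shiftUp, sum_map_add]

lemma smallestOverlined_iff {L : List OPart} :
    SmallestOverlined L ↔ ∃ N v, L = N ++ [((v, true) : OPart)] := by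
  simp only [SmallestOverlined, getLast?_eq_some_iff]
  constructor
  · rintro ⟨⟨v, b⟩, ⟨N, rfl⟩, rfl⟩
    exact ⟨N, v, rfl⟩
  · rintro ⟨N, v, rfl⟩
    exact ⟨_, ⟨N, rfl⟩, rfl⟩

lemma smallestNonOverlined_iff {L : List OPart} :
    SmallestNonOverlined L ↔ ∃ N v, L = N ++ [((v, false) : OPart)] := by
  simp only [SmallestNonOverlined, getLast?_eq_some_iff]
  constructor
  · rintro ⟨⟨v, b⟩, ⟨N, rfl⟩, rfl⟩
    exact ⟨N, v, rfl⟩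
  · rintro ⟨N, v, rfl⟩
    exact ⟨_, ⟨N, rfl⟩, rfl⟩

lemma smallestNonOverlined_shiftUp {L : List OPart} (h : SmallestOverlined L) :
    SmallestNonOverlined (shiftUp L) := by
  obtain ⟨N, v, rfl⟩ := smallestOverlined_iff.mp h
  exact smallestNonOverlined_iff.mpr ⟨_, _, shiftUp_concat N _⟩

lemma smallestOverlined_shiftDown {L : List OPart} (h : SmallestNonOverlined L) :
    SmallestOverlined (shiftDown L) := by
  obtain ⟨N, v, rfl⟩ := smallestNonOverlined_iff.mp h
  exact smallestOverlined_iff.mpr ⟨_, _, shiftDown_concat N _⟩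

lemma shiftDown_shiftUp {L : List OPart} (h : SmallestOverlined L) :
    shiftDown (shiftUp L) = L := by
  obtain ⟨N, v, rfl⟩ := smallestOverlined_iff.mp h
  simp [Function.comp_def]

lemma shiftUp_shiftDown {L : List OPart} (hpos : ∀ p ∈ L, 1 ≤ p.1)
    (h : SmallestNonOverlined L) : shiftUp (shiftDown L) = L := by
  obtain ⟨N, v, rfl⟩ := smallestNonOverlined_iff.mp h
  simp only [mem_append, mem_singleton] at hpos
  simp only [shiftDown_concat, shiftUp_concat, map_map]
  congr 1
  · refine (map_congr_left fun p hp => ?_).trans N.map_id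
    have := hpos p (.inl hp)
    ext <;> simp; omega
  · have := hpos _ (.inr rfl)
    simp; omega

lemma isOverpartition_iff {L : List OPart} :
    IsOverpartition L ↔ (∀ p ∈ L, 1 ≤ p.1) ∧ IsChain (fun p q => okey q ≤ okey p) L ∧
      ∀ v : ℕ, L.count ((v, true) : OPart) ≤ 1 :=
  Iff.rfl

lemma okey_succPart {p : OPart} (hp : 1 ≤ p.1) : okey (succPart p) = okey p + 2 := by
  obtain ⟨v, b⟩ := p
  cases b <;> simp [okey] at * <;> omega

lemma okey_le_of_mem_concat {M : List OPart} {x y : OPart}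
    (h : IsChain (fun p q => okey q ≤ okey p) (M ++ [x])) (hy : y ∈ M) : okey x ≤ okey y := by
  have : Trans (fun p q : OPart => okey q ≤ okey p) (fun p q => okey q ≤ okey p)
      (fun p q => okey q ≤ okey p) := ⟨fun h₁ h₂ => h₂.trans h₁⟩
  exact (pairwise_append.mp (isChain_iff_pairwise.mp h)).2.2 y hy x (mem_singleton_self x)

lemma succPart_injective : Function.Injective succPart := by
  rintro ⟨a, b⟩ ⟨c, d⟩ h
  simpa using h

lemma isOverpartition_map_succPart_iff {L : List OPart} (hpos : ∀ p ∈ L, 1 ≤ p.1) :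
    IsOverpartition (L.map succPart) ↔ IsOverpartition L := by
  have hchain : IsChain (fun p q => okey q ≤ okey p) (L.map succPart) ↔
      IsChain (fun p q => okey q ≤ okey p) L := by
    rw [isChain_map]
    refine IsChain.iff_of_mem_imp fun a b ha hb => ?_
    rw [okey_succPart (hpos a ha), okey_succPart (hpos b hb)]
    omega
  have hcount : (∀ v, (L.map succPart).count ((v, true) : OPart) ≤ 1) ↔
      ∀ v, L.count ((v, true) : OPart) ≤ 1 := by
    have hsucc (v : ℕ) : (L.map succPart).count (v + 1, true) = L.count (v, true) :=
      count_map_of_injective _ _ succPart_injective (v, true)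
    refine ⟨fun h v => hsucc v ▸ h (v + 1), fun h v => ?_⟩
    rcases v with _ | v
    · rw [count_eq_zero.mpr (by simp)]
      exact zero_le_one
    · exact (hsucc v).symm ▸ h v
  have hpos' : ∀ p ∈ L.map succPart, 1 ≤ p.1 := by
    simp only [mem_map]
    rintro _ ⟨p, -, rfl⟩
    exact Nat.le_add_left 1 p.1
  rw [isOverpartition_iff, isOverpartition_iff, hchain, hcount]
  exact and_congr_left' (iff_of_true hpos' hpos)

lemma isOverpartition_concat_overlined_iff (M : List OPart) (w : ℕ) :
    IsOverpartition (M ++ [(w, true)]) ↔ IsOverpartition (M ++ [(w, false)]) := by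
  have hchain (b : Bool) : IsChain (fun p q => okey q ≤ okey p) (M ++ [(w, b)]) ↔
      IsChain (fun p q => okey q ≤ okey p) M ∧ ∀ y ∈ M.getLast?, okey (w, b) ≤ okey y := by
    simp [isChain_append]
  have hcount (v : ℕ) (b : Bool) : (M ++ [(w, b)]).count (v, true) =
      M.count (v, true) + if (w, b) = (v, true) then 1 else 0 := by
    simp [count_append, count_singleton]
  have hpos_iff (b : Bool) : (∀ p ∈ M ++ [(w, b)], 1 ≤ p.1) ↔ (∀ p ∈ M, 1 ≤ p.1) ∧ 1 ≤ w := by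
    simp [or_imp, forall_and]
  simp only [isOverpartition_iff, hpos_iff]
  constructor
  · rintro ⟨hpos, hch, hc⟩
    obtain ⟨hM, hlast⟩ := (hchain true).mp hch
    refine ⟨hpos, (hchain false).mpr ⟨hM, fun y hy => ?_⟩, fun v => ?_⟩
    · have hy' : y ≠ (w, true) := by
        rintro rfl
        have := hc w
        rw [hcount, if_pos rfl] at this
        have := count_pos_iff.mpr (mem_of_getLast? hy)
        omega
      have := hlast y hy
      obtain ⟨a, c⟩ := y
      cases c <;> simp [okey] at * <;> omega
    · have := hc v
      rw [hcount] at this ⊢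
      split_ifs at this ⊢ <;> simp_all
  · rintro ⟨hpos, hch, hc⟩
    refine ⟨hpos, (hchain true).mpr ⟨((hchain false).mp hch).1, fun y hy => ?_⟩, fun v => ?_⟩
    · exact (((hchain false).mp hch).2 y hy).trans' (by simp [okey])
    · rw [hcount]
      split_ifs with hv
      · obtain rfl : w = v := by simpa using hv
        have : (w, true) ∉ M := fun hmem => by
          have := okey_le_of_mem_concat hch hmem
          simp [okey] at this
          omega
        rw [count_eq_zero.mpr this]
      · simpa [hcount] using hc v

lemma diffCond_map_succPart_iff (k : ℕ) (L : List OPart) :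
    DiffCond k (L.map succPart) ↔ DiffCond k L := by
  simp only [DiffCond, getElem?_map, Option.map_eq_some_iff]
  constructor
  · intro h j p q hp hq
    simpa using h j _ _ ⟨p, hp, rfl⟩ ⟨q, hq, rfl⟩
  · rintro h j _ _ ⟨p, hp, rfl⟩ ⟨q, hq, rfl⟩
    simpa using h j p q hp hq

/-- The smallest part enters the difference condition only as `d_{j+k-1}`, through its value;
for `k = 1` it is also `d_j`, but then `d_j - d_j ≥ 1` fails whatever its overline. -/
lemma diffCond_concat_iff {k : ℕ} (hk : 1 ≤ k) (M : List OPart) (w : ℕ) (b b' : Bool) :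
    DiffCond k (M ++ [(w, b)]) ↔ DiffCond k (M ++ [(w, b')]) := by
  suffices key : ∀ b b' : Bool, DiffCond k (M ++ [(w, b)]) → DiffCond k (M ++ [(w, b')]) from
    ⟨key b b', key b' b⟩
  intro b b' h j p q hp hq
  have hjq : j + k - 1 < M.length + 1 := by simpa using (List.getElem?_eq_some_iff.mp hq).1
  rcases lt_or_ge j M.length with hj | hj
  · have hp' : (M ++ [(w, b)])[j]? = some p := by
      rwa [getElem?_append_left hj] at hp ⊢
    rcases lt_or_ge (j + k - 1) M.length with hjM | hjM
    · exact h j p q hp' (by rwa [getElem?_append_left hjM] at hq ⊢)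
    · have e : j + k - 1 = M.length := by omega
      rw [e, getElem?_concat_length, Option.some_inj] at hq
      subst hq
      simpa using h j p (w, b) hp' (by rw [e, getElem?_concat_length])
  · have e : j + k - 1 = M.length := by omega
    have := h j (w, b) (w, b) (by rw [show j = M.length by omega, getElem?_concat_length])
      (by rw [e, getElem?_concat_length])
    cases b <;> simp at this

lemma exists_getElem?_eq_of_le_count {α : Type*} [BEq α] [LawfulBEq α] {L : List α} {a : α}
    {k : ℕ} (hk : 1 ≤ k) (h : k ≤ L.count a) : ∃ j, L[j]? = some a ∧ j + k - 1 < L.length := by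
  induction L with
  | nil => simp at h; omega
  | cons x T ih =>
    by_cases hx : x = a
    · subst hx
      have := count_le_length (a := x) (l := T)
      rw [count_cons_self] at h
      exact ⟨0, rfl, by simp only [length_cons]; omega⟩
    · rw [count_cons_of_ne hx] at h
      obtain ⟨j, hj, hjT⟩ := ih h
      exact ⟨j + 1, hj, by simp only [length_cons]; omega⟩

/-- `k` copies of a non-overlined `2` would violate the difference condition between the
first of them and the part `k - 1` places further on. -/
lemma count_two_le_of_diffCond {k : ℕ} (hk : 1 ≤ k) {L : List OPart}
    (hpos : ∀ p ∈ L, 1 ≤ p.1) (h : DiffCond k L) : L.count (2, false) ≤ k - 1 := by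
  by_contra! hcount
  obtain ⟨j, hj, hjk⟩ := exists_getElem?_eq_of_le_count (L := L) (a := (2, false)) hk (by omega)
  have := h j _ _ hj (getElem?_eq_getElem hjk)
  have := hpos _ (getElem_mem hjk)
  simp only [Bool.false_eq_true, if_false] at *
  omega

lemma dCondition_shiftUp_iff {k : ℕ} (hk : 1 ≤ k) {L : List OPart} (hpos : ∀ p ∈ L, 1 ≤ p.1)
    (hL : SmallestOverlined L) : DCondition k 1 (shiftUp L) ↔ DCondition k k L := by
  obtain ⟨N, v, rfl⟩ := smallestOverlined_iff.mp hL
  have hup : shiftUp (N ++ [(v, true)]) = N.map succPart ++ [(v + 1, false)] :=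
    shiftUp_concat N _
  have hmap : (N ++ [(v, true)]).map succPart = N.map succPart ++ [(v + 1, true)] := by simp
  have hover :
      IsOverpartition (shiftUp (N ++ [(v, true)])) ↔ IsOverpartition (N ++ [(v, true)]) := by
    rw [hup, ← isOverpartition_concat_overlined_iff, ← hmap, isOverpartition_map_succPart_iff hpos]
  have hdiff : DiffCond k (shiftUp (N ++ [(v, true)])) ↔ DiffCond k (N ++ [(v, true)]) := by
    rw [hup, diffCond_concat_iff hk _ _ _ true, ← hmap, diffCond_map_succPart_iff]
  have hone : (shiftUp (N ++ [(v, true)])).count (1, false) = 0 := by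
    rw [count_eq_zero, hup]
    simp only [mem_append, mem_map, mem_singleton, Prod.ext_iff]
    rintro (⟨p, hp, hp1, -⟩ | ⟨h1, -⟩)
    · have := hpos p (mem_append_left _ hp)
      simp only [succPart] at hp1
      omega
    · have := hpos _ (mem_append_right _ (mem_singleton_self _))
      omega
  have htwo :
      (N ++ [(v, true)]).count (1, false) ≤ (shiftUp (N ++ [(v, true)])).count (2, false) := by
    rw [← count_map_of_injective _ _ succPart_injective, hmap, hup]
    simp [count_append]
  rw [DCondition, DCondition, hover, hdiff, hone]
  refine and_congr_right fun ho => and_congr_right fun hd => iff_of_true le_rfl ?_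
  exact htwo.trans (count_two_le_of_diffCond hk (hover.mpr ho).1 (hdiff.mpr hd))

lemma two_le_of_mem {k : ℕ} {L : List OPart} (hL : DCondition k 1 L)
    (hlast : SmallestNonOverlined L) : ∀ p ∈ L, 2 ≤ p.1 := by
  obtain ⟨N, w, rfl⟩ := smallestNonOverlined_iff.mp hlast
  obtain ⟨⟨hpos, hchain, -⟩, -, hone⟩ := hL
  have hw : 2 ≤ w := by
    have := hpos _ (mem_append_right _ (mem_singleton_self _))
    have : w ≠ 1 := by
      rintro rfl
      have := count_pos_iff.mpr (mem_append_right N (mem_singleton_self ((1, false) : OPart)))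
      omega
    omega
  simp only [mem_append, mem_singleton]
  rintro p (hp | rfl)
  · have := okey_le_of_mem_concat hchain hp
    obtain ⟨a, c⟩ := p
    cases c <;> simp [okey] at this ⊢ <;> omega
  · exact hw

lemma one_le_of_mem_shiftDown {L : List OPart} (h : ∀ p ∈ L, 2 ≤ p.1) :
    ∀ p ∈ shiftDown L, 1 ≤ p.1 := by
  intro p hp
  have : p.1 ∈ L.map (·.1 - 1) := map_fst_shiftDown L ▸ mem_map_of_mem hp
  obtain ⟨q, hq, hpq⟩ := mem_map.mp this
  have := h q hq
  omega

lemma shiftDown_spec {k m n : ℕ} (hk : 1 ≤ k) {L : List OPart}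
    (hL : DCondition k 1 L ∧ L.length = m ∧ osum L = n ∧ SmallestNonOverlined L) :
    DCondition k k (shiftDown L) ∧ (shiftDown L).length = m ∧ osum (shiftDown L) + m = n ∧
      SmallestOverlined (shiftDown L) := by
  obtain ⟨hD, hlen, hsum, hlast⟩ := hL
  have h2 := two_le_of_mem hD hlast
  have hback := shiftUp_shiftDown (fun p hp => (h2 p hp).trans' one_le_two) hlast
  have hlast' := smallestOverlined_shiftDown hlast
  refine ⟨(dCondition_shiftUp_iff hk (one_le_of_mem_shiftDown h2) hlast').mp (hback.symm ▸ hD),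
    (length_shiftDown L).trans hlen, ?_, hlast'⟩
  have := osum_shiftUp (shiftDown L)
  rw [hback, length_shiftDown] at this
  omega

lemma shiftUp_spec {k m n : ℕ} (hk : 1 ≤ k) {L : List OPart}
    (hL : DCondition k k L ∧ L.length = m ∧ osum L + m = n ∧ SmallestOverlined L) :
    DCondition k 1 (shiftUp L) ∧ (shiftUp L).length = m ∧ osum (shiftUp L) = n ∧
      SmallestNonOverlined (shiftUp L) := by
  obtain ⟨hD, hlen, hsum, hlast⟩ := hL
  refine ⟨(dCondition_shiftUp_iff hk hD.1.1 hlast).mpr hD, ?_,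
    by rw [osum_shiftUp, hlen, hsum], smallestNonOverlined_shiftUp hlast⟩
  simpa [hlen] using congrArg length (map_fst_shiftUp L)

def shiftDownEquiv {k : ℕ} (hk : 1 ≤ k) (m n : ℕ) :
    {L // DCondition k 1 L ∧ L.length = m ∧ osum L = n ∧ SmallestNonOverlined L} ≃
      {L // DCondition k k L ∧ L.length = m ∧ osum L + m = n ∧ SmallestOverlined L} where
  toFun L := ⟨shiftDown L, shiftDown_spec hk L.2⟩
  invFun L := ⟨shiftUp L, shiftUp_spec hk L.2⟩
  left_inv L := Subtype.ext <| shiftUp_shiftDown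
    (fun p hp => (two_le_of_mem L.2.1 L.2.2.2.2 p hp).trans' one_le_two) L.2.2.2.2
  right_inv L := Subtype.ext <| shiftDown_shiftUp L.2.2.2.2

end OverpartitionShift

open OverpartitionShift

/-- `G_{k,1}(m,n) = F_{k,k}(m, n−m)`, the right-hand side being `0` when `n − m < 0`. -/
theorem stmt13 (k m n : ℕ) (hk : 1 ≤ k) :
    Gmn k 1 m n = if m ≤ n then Fmn k k m (n - m) else 0 := by
  rw [Gmn, Nat.card_congr (shiftDownEquiv hk m n)]
  split_ifs with hmn
  · exact Nat.card_congr <| Equiv.subtypeEquivRight fun L =>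
      and_congr_right' <| and_congr_right' <| and_congr_left' (by omega)
  · have : IsEmpty {L // DCondition k k L ∧ L.length = m ∧ osum L + m = n ∧
        SmallestOverlined L} := ⟨fun L => hmn (by have := L.2.2.2.1; omega)⟩
    exact Nat.card_of_isEmpty
end
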